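/- arXiv:2403.08614 — 8 statements merged into one kernel-verified Lean document; each statement's English description precedes it below -/
import Mathlib

section
/- Let E be a real inner product space, 0 < ε < ε', and let κ be the smoothed controller κ(x) = κ₀(x) − max(0, φ(x)) · min(0, ⟪g(x), κ₀(x)⟫) · g(x) with φ(x) = min(1, (ε' − b(x))/(ε' − ε)). For every point x with b(x) ≤ ε and ‖g(x)‖ = 1, one has ⟪g(x), κ(x)⟫ ≥ 0; moreover, if in addition ⟪g(x), κ₀(x)⟫ ≤ 0, then ⟪g(x), κ(x)⟫ = 0. -/
open scoped RealInnerProductSpace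

/-- Tangency property of the smoothed controller. At any point `x`
with `b(x) ≤ ε` and `‖g(x)‖ = 1` one has `⟪g(x), κ(x)⟫ ≥ 0`, and moreover if
`⟪g(x), κ₀(x)⟫ ≤ 0` then `⟪g(x), κ(x)⟫ = 0`. -/
theorem smoothed_controller_tangency
    {E : Type*} [NormedAddCommGroup E] [InnerProductSpace ℝ E]
    (ε ε' : ℝ) (hε : 0 < ε) (hεε' : ε < ε')
    (b : E → ℝ) (g κ₀ : E → E)
    (φ : E → ℝ) (hφ : ∀ x, φ x = min 1 ((ε' - b x) / (ε' - ε)))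
    (κ : E → E)
    (hκ : ∀ x, κ x = κ₀ x - (max 0 (φ x) * min 0 ⟪g x, κ₀ x⟫) • g x)
    (x : E) (hbx : b x ≤ ε) (hgx : ‖g x‖ = 1) :
    0 ≤ ⟪g x, κ x⟫ ∧ (⟪g x, κ₀ x⟫ ≤ 0 → ⟪g x, κ x⟫ = 0) := by
  have hden : 0 < ε' - ε := by linarith
  have hφ1 : φ x = 1 := by
    rw [hφ]
    have : (1 : ℝ) ≤ (ε' - b x) / (ε' - ε) := by
      rw [le_div_iff₀ hden]; linarith
    simp [min_eq_left this]
  have hgg : ⟪g x, g x⟫ = 1 := by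
    have := real_inner_self_eq_norm_sq (g x)
    rw [this, hgx]; norm_num
  have hval : ⟪g x, κ x⟫ = max 0 ⟪g x, κ₀ x⟫ := by
    rw [hκ, inner_sub_right, inner_smul_right, hgg, hφ1]
    rcases le_or_gt (⟪g x, κ₀ x⟫) 0 with h | h
    · rw [min_eq_right h, max_eq_left h]; ring_nf; simp
    · rw [min_eq_left h.le, max_eq_right h.le]; ring
  rw [hval]
  refine ⟨le_max_left _ _, fun h => ?_⟩
  simp [max_eq_left h]
end

section
/- Let E be a real inner product space, 0 < ε < ε', and let κ be the smoothed controller κ(x) = κ₀(x) − max(0, φ(x)) · min(0, ⟪g(x), κ₀(x)⟫) · g(x) with φ(x) = min(1, (ε' − b(x))/(ε' − ε)). Assume b : E → ℝ is differentiable at every point with gradient g(x) at x, that ‖g(x)‖ = 1 for every x with b(x) ≤ ε, and that κ₀ : E → E is arbitrary. Then the practical free space {x : b(x) ≥ ε} is positively invariant: for every differentiable curve x : ℝ → E satisfying x'(t) = κ(x(t)) for all t ≥ 0 and b(x(0)) ≥ ε, one has b(x(t)) ≥ ε for all t ≥ 0. -/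
/-!
Along a trajectory, `t ↦ b (x t)` has derivative `⟪g, κ⟫` at `x t`. Wherever `b ≤ ε` the blending
factor `φ` equals `1` and `g` is a unit vector, so `κ` is `κ₀` with its component along `-g`
removed, and `⟪g, κ⟫ ≥ 0`. A real function whose derivative is nonnegative whenever it lies below
the level `ε` cannot cross below that level.
-/

open Set
open scoped RealInnerProductSpace

/-- Compare `c - f` with the strictly increasing fences `δ * (1 + (t - a))` and let `δ → 0`. -/
theorem le_of_hasDerivWithinAt_nonneg_of_lt {f f' : ℝ → ℝ} {a c : ℝ}
    (hf : ∀ t ∈ Ici a, HasDerivWithinAt f (f' t) (Ici a) t)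
    (hf' : ∀ t ∈ Ici a, f t < c → 0 ≤ f' t) (ha : c ≤ f a) :
    ∀ t ∈ Ici a, c ≤ f t := by
  intro t ht
  have hcont : ContinuousOn f (Icc a t) := fun s hs =>
    (hf s hs.1).continuousWithinAt.mono Icc_subset_Ici_self
  have hfence : ∀ δ > 0, c - f t ≤ δ * (1 + (t - a)) := fun δ hδ =>
    image_le_of_deriv_right_lt_deriv_boundary' (f := fun s => c - f s) (f' := fun s => -f' s)
      (B := fun s => δ * (1 + (s - a))) (B' := fun _ => δ)
      (continuousOn_const.sub hcont)
      (fun s hs => ((hf s hs.1).mono (Ici_subset_Ici.2 hs.1)).const_sub c)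
      (by simp only [sub_self, add_zero, mul_one]; linarith)
      (by fun_prop)
      (fun s _ => by
        simpa using ((((hasDerivAt_id s).sub_const a).const_add 1).const_mul δ).hasDerivWithinAt)
      (fun s hs heq => by
        have hlt : f s < c := by nlinarith [hs.1]
        linarith [hf' s hs.1 hlt])
      ⟨ht, le_rfl⟩
  have hlen : 0 < 1 + (t - a) := by linarith [mem_Ici.1 ht]
  refine sub_nonpos.1 (le_of_forall_pos_le_add fun η hη => ?_)
  simpa [div_mul_cancel₀ η hlen.ne'] using hfence (η / (1 + (t - a))) (div_pos hη hlen)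

theorem HasGradientAt.comp_hasDerivAt {E : Type*} [NormedAddCommGroup E] [InnerProductSpace ℝ E]
    [CompleteSpace E] {b : E → ℝ} {g v : E} {x : ℝ → E} {t : ℝ}
    (hb : HasGradientAt b g (x t)) (hx : HasDerivAt x v t) :
    HasDerivAt (fun s => b (x s)) ⟪g, v⟫ t := by
  have h := hb.hasFDerivAt.comp_hasDerivAt t hx
  simp only [InnerProductSpace.toDual_apply_apply] at h
  exact h

section SafetyFilter

variable {E : Type*} [NormedAddCommGroup E] [InnerProductSpace ℝ E]

/-- The paper's smoothed controller `κ = safetyFilter φ g κ₀`: for a unit vector `u`, it removes the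
fraction `p` of the component of `v` pointing against `u`. -/
def safetyFilter (p : ℝ) (u v : E) : E := v - (max 0 p * min 0 ⟪u, v⟫) • u

theorem inner_safetyFilter_nonneg {p : ℝ} {u : E} (v : E) (hu : ‖u‖ = 1) (hp : 1 ≤ p) :
    0 ≤ ⟪u, safetyFilter p u v⟫ := by
  rw [safetyFilter, inner_sub_right, inner_smul_right, real_inner_self_eq_norm_sq, hu,
    max_eq_right (zero_le_one.trans hp)]
  rcases le_total 0 ⟪u, v⟫ with huv | huv
  · simpa [min_eq_left huv] using huv
  · rw [min_eq_right huv]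
    nlinarith

end SafetyFilter

theorem safety_positive_invariance_general
    {E : Type*} [NormedAddCommGroup E] [InnerProductSpace ℝ E] [CompleteSpace E]
    (ε ε' : ℝ) (hεε' : ε < ε')
    (b : E → ℝ) (g κ₀ : E → E)
    (hb : ∀ x, HasGradientAt b (g x) x)
    (hg : ∀ x, b x ≤ ε → ‖g x‖ = 1)
    (φ : E → ℝ) (hφ : ∀ x, φ x = min 1 ((ε' - b x) / (ε' - ε)))
    (κ : E → E)
    (hκ : ∀ x, κ x = κ₀ x - (max 0 (φ x) * min 0 ⟪g x, κ₀ x⟫) • g x)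
    (x : ℝ → E)
    (hx : ∀ t ∈ Set.Ici (0 : ℝ), HasDerivAt x (κ (x t)) t)
    (hx0 : ε ≤ b (x 0)) :
    ∀ t ∈ Set.Ici (0 : ℝ), ε ≤ b (x t) := by
  have hφ_eq_one : ∀ y, b y ≤ ε → φ y = 1 := fun y hy => by
    rw [hφ, min_eq_left ((one_le_div (sub_pos.2 hεε')).2 (by linarith))]
  have hderiv : ∀ t ∈ Ici (0 : ℝ), HasDerivAt (fun s => b (x s)) ⟪g (x t), κ (x t)⟫ t :=
    fun t ht => (hb (x t)).comp_hasDerivAt (hx t ht)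
  refine le_of_hasDerivWithinAt_nonneg_of_lt (fun t ht => (hderiv t ht).hasDerivWithinAt)
    (fun t _ hlt => ?_) hx0
  rw [hκ]
  exact inner_safetyFilter_nonneg (κ₀ (x t)) (hg _ hlt.le) (hφ_eq_one _ hlt.le).ge

/-- Safety (Theorem 1). Suppose `b` is differentiable with gradient
`g(x)` at every `x`, `‖g(x)‖ = 1` wherever `b(x) ≤ ε`, and `κ` is the smoothed
controller. Then the practical free space `{x : b x ≥ ε}` is positively
invariant for `ẋ = κ(x)`. -/
theorem safety_positive_invariance
    {E : Type*} [NormedAddCommGroup E] [InnerProductSpace ℝ E] [CompleteSpace E]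
    (ε ε' : ℝ) (hε : 0 < ε) (hεε' : ε < ε')
    (b : E → ℝ) (g κ₀ : E → E)
    (hb : ∀ x, HasGradientAt b (g x) x)
    (hg : ∀ x, b x ≤ ε → ‖g x‖ = 1)
    (φ : E → ℝ) (hφ : ∀ x, φ x = min 1 ((ε' - b x) / (ε' - ε)))
    (κ : E → E)
    (hκ : ∀ x, κ x = κ₀ x - (max 0 (φ x) * min 0 ⟪g x, κ₀ x⟫) • g x)
    (x : ℝ → E)
    (hx : ∀ t ∈ Set.Ici (0 : ℝ), HasDerivAt x (κ (x t)) t)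
    (hx0 : ε ≤ b (x 0)) :
    ∀ t ∈ Set.Ici (0 : ℝ), ε ≤ b (x t) :=
  safety_positive_invariance_general ε ε' hεε' b g κ₀ hb hg φ hφ κ hκ x hx hx0
end

section
/- Let E be a real inner product space, 0 < ε < ε', k > 0, and x_d ∈ E. Let κ be the smoothed controller κ(x) = κ₀(x) − max(0, φ(x)) · min(0, ⟪g(x), κ₀(x)⟫) · g(x) with φ(x) = min(1, (ε' − b(x))/(ε' − ε)) and nominal controller κ₀(x) = −k(x − x_d). If ‖g(x)‖ ≤ 1 for every x ∈ E, then ⟪x − x_d, κ(x)⟫ ≤ 0 for every x ∈ E; in particular ⟪x − x_d, κ(x)⟫ ≤ −k‖x − x_d‖²(1 − max(0, φ(x))·min(1, ‖g(x)‖²)) ≤ 0. -/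
open scoped RealInnerProductSpace

/-- Lyapunov descent inequality (Theorem 2). With the nominal
controller `κ₀(x) = −k(x − x_d)`, `k > 0`, and `‖g(x)‖ ≤ 1` everywhere, the
smoothed controller satisfies
`⟪x − x_d, κ(x)⟫ ≤ −k‖x − x_d‖²(1 − max(0, φ(x))·min(1, ‖g(x)‖²)) ≤ 0`. -/
theorem lyapunov_descent
    {E : Type*} [NormedAddCommGroup E] [InnerProductSpace ℝ E]
    (ε ε' : ℝ) (hε : 0 < ε) (hεε' : ε < ε')
    (k : ℝ) (hk : 0 < k) (xd : E)
    (b : E → ℝ) (g κ₀ : E → E)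
    (hκ₀ : ∀ x, κ₀ x = -(k • (x - xd)))
    (hgnorm : ∀ x, ‖g x‖ ≤ 1)
    (φ : E → ℝ) (hφ : ∀ x, φ x = min 1 ((ε' - b x) / (ε' - ε)))
    (κ : E → E)
    (hκ : ∀ x, κ x = κ₀ x - (max 0 (φ x) * min 0 ⟪g x, κ₀ x⟫) • g x) :
    ∀ x : E,
      ⟪x - xd, κ x⟫ ≤ -k * ‖x - xd‖ ^ 2 * (1 - max 0 (φ x) * min 1 (‖g x‖ ^ 2))
      ∧ -k * ‖x - xd‖ ^ 2 * (1 - max 0 (φ x) * min 1 (‖g x‖ ^ 2)) ≤ 0 := by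
  intro x
  set u := x - xd with hu
  set m := max 0 (φ x) with hm
  set s := (⟪g x, u⟫ : ℝ) with hs
  have hm0 : 0 ≤ m := le_max_left _ _
  have hm1 : m ≤ 1 := by
    rw [hm, hφ]
    exact max_le (by norm_num) (min_le_left _ _)
  -- rewrite inner products
  have hinner : (⟪g x, κ₀ x⟫ : ℝ) = -k * s := by
    rw [hκ₀, inner_neg_right, real_inner_smul_right]; ring
  have hmin : min 0 (⟪g x, κ₀ x⟫ : ℝ) = -k * max 0 s := by
    rw [hinner]
    rcases le_total s 0 with h | h
    · rw [max_eq_left h, min_eq_left (by nlinarith), mul_zero]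
    · rw [max_eq_right h, min_eq_right (by nlinarith)]
  have hinner2 : (⟪u, κ₀ x⟫ : ℝ) = -(k * ‖u‖ ^ 2) := by
    rw [hκ₀, inner_neg_right, real_inner_smul_right, real_inner_self_eq_norm_sq]
  have hmaxsq : max 0 s * s = (max 0 s) ^ 2 := by
    rcases le_total s 0 with h | h
    · rw [max_eq_left h]; ring
    · rw [max_eq_right h]; ring
  have hexp : (⟪u, κ x⟫ : ℝ) = -k * ‖u‖ ^ 2 + k * m * (max 0 s) ^ 2 := by
    have hsu : (⟪u, g x⟫ : ℝ) = s := by rw [hs, real_inner_comm]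
    rw [hκ, inner_sub_right, real_inner_smul_right, hmin, hinner2, hsu]
    linear_combination (k * m) * hmaxsq
  have hCS : |s| ≤ ‖g x‖ * ‖u‖ := abs_real_inner_le_norm _ _
  have hgu : 0 ≤ ‖g x‖ := norm_nonneg _
  have hun : 0 ≤ ‖u‖ := norm_nonneg _
  have hkey : (max 0 s) ^ 2 ≤ ‖u‖ ^ 2 * min 1 (‖g x‖ ^ 2) := by
    have h1 : (max 0 s) ^ 2 ≤ s ^ 2 := by
      rcases le_total s 0 with h | h
      · rw [max_eq_left h]; nlinarith [sq_nonneg s]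
      · rw [max_eq_right h]
    have h2 : s ^ 2 ≤ (‖g x‖ * ‖u‖) ^ 2 := by
      have := sq_abs s
      nlinarith [abs_nonneg s]
    have hg1 : ‖g x‖ ^ 2 ≤ 1 := by nlinarith [hgnorm x]
    rcases le_total (1 : ℝ) (‖g x‖ ^ 2) with h | h
    · rw [min_eq_left h]
      nlinarith [sq_nonneg ‖u‖]
    · rw [min_eq_right h]
      nlinarith
  have hmin1 : min 1 (‖g x‖ ^ 2) ≤ 1 := min_le_left _ _
  have hmin0 : (0:ℝ) ≤ min 1 (‖g x‖ ^ 2) := le_min (by norm_num) (by positivity)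
  constructor
  · rw [hexp]
    nlinarith [mul_le_mul_of_nonneg_left hkey hm0]
  · have h1t : 0 ≤ 1 - m * min 1 (‖g x‖ ^ 2) := by nlinarith
    linarith [mul_nonneg (mul_nonneg hk.le (sq_nonneg ‖u‖)) h1t]
end

section
/- Let E be a real inner product space, 0 < ε < ε', k > 0, and x_d ∈ E. Let κ be the smoothed controller κ(x) = κ₀(x) − max(0, φ(x)) · min(0, ⟪g(x), κ₀(x)⟫) · g(x) with φ(x) = min(1, (ε' − b(x))/(ε' − ε)) and κ₀(x) = −k(x − x_d), and assume ‖g(y)‖ ≤ 1 for every y ∈ E. If x ∈ E satisfies b(x) ≥ ε, x ≠ x_d, and ⟪x − x_d, κ(x)⟫ = 0, then b(x) = ε, ‖g(x)‖ = 1, and there exists λ > 0 such that x − x_d = λ · g(x). -/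
open scoped RealInnerProductSpace

set_option maxHeartbeats 800000

/-- Characterization of the undesired stationary points (Theorem 2).
If `b(x) ≥ ε`, `x ≠ x_d` and `⟪x − x_d, κ(x)⟫ = 0`, then `b(x) = ε`,
`‖g(x)‖ = 1`, and `x − x_d = λ g(x)` for some `λ > 0`. -/
theorem stationary_points_characterization
    {E : Type*} [NormedAddCommGroup E] [InnerProductSpace ℝ E]
    (ε ε' : ℝ) (hε : 0 < ε) (hεε' : ε < ε')
    (k : ℝ) (hk : 0 < k) (xd : E)
    (b : E → ℝ) (g κ₀ : E → E)
    (hκ₀ : ∀ x, κ₀ x = -(k • (x - xd)))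
    (hgnorm : ∀ y, ‖g y‖ ≤ 1)
    (φ : E → ℝ) (hφ : ∀ x, φ x = min 1 ((ε' - b x) / (ε' - ε)))
    (κ : E → E)
    (hκ : ∀ x, κ x = κ₀ x - (max 0 (φ x) * min 0 ⟪g x, κ₀ x⟫) • g x)
    (x : E) (hbx : ε ≤ b x) (hxd : x ≠ xd)
    (hstat : ⟪x - xd, κ x⟫ = 0) :
    b x = ε ∧ ‖g x‖ = 1 ∧ ∃ lam : ℝ, 0 < lam ∧ x - xd = lam • g x := by
  set u : E := x - xd with hu
  have hune : u ≠ 0 := sub_ne_zero.mpr hxd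
  have hunorm : 0 < ‖u‖ := norm_pos_iff.mpr hune
  have hu2 : (0 : ℝ) < ‖u‖ ^ 2 := pow_pos hunorm 2
  set s : ℝ := ⟪g x, u⟫ with hs
  have hgk : ⟪g x, κ₀ x⟫ = -(k * s) := by
    rw [hκ₀ x, inner_neg_right, real_inner_smul_right]
  have hus : ⟪u, g x⟫ = s := real_inner_comm _ _
  have huκ0 : ⟪u, κ₀ x⟫ = -(k * ‖u‖ ^ 2) := by
    rw [hκ₀ x, inner_neg_right, real_inner_smul_right, ← hu,
      real_inner_self_eq_norm_sq]
  have hexp : -(k * ‖u‖ ^ 2) - (max 0 (φ x) * min 0 (-(k * s))) * s = 0 := by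
    have h := hstat
    rw [hκ x, inner_sub_right, real_inner_smul_right, hgk, huκ0, hus] at h
    linarith [h]
  have hspos : 0 < s := by
    by_contra h
    push_neg at h
    have hm : min 0 (-(k * s)) = 0 := by
      apply min_eq_left
      nlinarith
    rw [hm] at hexp
    nlinarith
  have hmin : min 0 (-(k * s)) = -(k * s) := by
    apply min_eq_right
    nlinarith
  rw [hmin] at hexp
  have key : ‖u‖ ^ 2 = max 0 (φ x) * s ^ 2 := by nlinarith
  have hCS : s ≤ ‖u‖ := by
    calc s ≤ ‖g x‖ * ‖u‖ := real_inner_le_norm _ _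
    _ ≤ 1 * ‖u‖ := mul_le_mul_of_nonneg_right (hgnorm x) (le_of_lt hunorm)
    _ = ‖u‖ := one_mul _
  have hs2 : s ^ 2 ≤ ‖u‖ ^ 2 := by nlinarith
  have hmax1 : max 0 (φ x) ≤ 1 := by
    rw [hφ x]
    simp [le_max_iff, min_le_iff]
  have hseq : s ^ 2 = ‖u‖ ^ 2 := by nlinarith [le_max_left 0 (φ x)]
  have hsnorm : s = ‖u‖ := by nlinarith
  have hmaxeq : max 0 (φ x) = 1 := by
    have hmm : max 0 (φ x) * ‖u‖ ^ 2 = 1 * ‖u‖ ^ 2 := by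
      rw [one_mul, ← hseq]; linarith [key]
    exact mul_right_cancel₀ hu2.ne' hmm
  have hφ1 : (1 : ℝ) ≤ φ x := by
    by_contra h
    push_neg at h
    have h2 := max_lt one_pos h
    rw [hmaxeq] at h2
    exact lt_irrefl _ h2
  have hb : b x = ε := by
    rw [hφ x] at hφ1
    have hd : (1 : ℝ) ≤ (ε' - b x) / (ε' - ε) :=
      le_trans hφ1 (min_le_right _ _)
    have hden : 0 < ε' - ε := by linarith
    rw [le_div_iff₀ hden] at hd
    linarith
  have hgone : ‖g x‖ = 1 := by
    have h1 : ‖u‖ ≤ ‖g x‖ * ‖u‖ := hsnorm ▸ real_inner_le_norm (g x) u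
    have h2 : 1 ≤ ‖g x‖ := by
      by_contra h
      push_neg at h
      nlinarith
    linarith [hgnorm x]
  refine ⟨hb, hgone, ‖u‖, hunorm, ?_⟩
  have hinner : ⟪g x, u⟫ = ‖g x‖ * ‖u‖ := by rw [hgone, one_mul, ← hsnorm]
  have h3 := (inner_eq_norm_mul_iff_real).mp hinner
  rw [hgone, one_smul] at h3
  exact h3.symm
end

section
/- Let E be a real inner product space, 0 < ε < ε', k > 0, x_d ∈ E, and let κ be the smoothed controller κ(x) = κ₀(x) − max(0, φ(x)) · min(0, ⟪g(x), κ₀(x)⟫) · g(x) with φ(x) = min(1, (ε' − b(x))/(ε' − ε)) and κ₀(x) = −k(x − x_d). Assume ‖g(y)‖ ≤ 1 for every y ∈ E. Then for every differentiable curve x : ℝ → E satisfying x'(t) = κ(x(t)) for all t ≥ 0, the function t ↦ ‖x(t) − x_d‖ is non-increasing on [0, ∞). -/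
open scoped RealInnerProductSpace

/-!
Since `‖g‖ ≤ 1` and the gain `max 0 φ` is at most `1`, the correction removes at most the part of
the nominal velocity `κ₀` along `g`, so `⟪κ₀, κ⟫ ≥ ‖κ₀‖² - ⟪g, κ₀⟫² ≥ 0`. As `κ₀(x) = -k (x - x_d)`
with `k > 0`, this says `⟪x - x_d, κ x⟫ ≤ 0`, i.e. the derivative of `‖x(t) - x_d‖²` is
nonpositive along trajectories.
-/

theorem min_zero_mul_self_nonneg (c : ℝ) : 0 ≤ min 0 c * c := by
  rcases le_total c 0 with hc | hc
  · rw [min_eq_right hc]; exact mul_self_nonneg c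
  · rw [min_eq_left hc, zero_mul]

theorem min_zero_mul_self_le_sq (c : ℝ) : min 0 c * c ≤ c ^ 2 := by
  rcases le_total c 0 with hc | hc
  · rw [min_eq_right hc, sq]
  · rw [min_eq_left hc, zero_mul]; positivity

section
variable {E : Type*} [NormedAddCommGroup E] [InnerProductSpace ℝ E]

theorem inner_self_sub_smul_min_inner_nonneg {u g : E} {a : ℝ} (hg : ‖g‖ ≤ 1) (ha : a ≤ 1) :
    0 ≤ ⟪u, u - (a * min 0 ⟪g, u⟫) • g⟫ := by
  set c := ⟪g, u⟫
  have hc : c ^ 2 ≤ ‖u‖ ^ 2 := by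
    calc c ^ 2 ≤ (‖g‖ * ‖u‖) ^ 2 :=
          sq_le_sq' (neg_le_of_abs_le (abs_real_inner_le_norm g u)) (real_inner_le_norm g u)
      _ ≤ ‖u‖ ^ 2 := by gcongr; exact mul_le_of_le_one_left (norm_nonneg u) hg
  calc 0 ≤ ‖u‖ ^ 2 - min 0 c * c := sub_nonneg.2 ((min_zero_mul_self_le_sq c).trans hc)
    _ ≤ ‖u‖ ^ 2 - a * (min 0 c * c) :=
        sub_le_sub_left (mul_le_of_le_one_left (min_zero_mul_self_nonneg c) ha) _
    _ = ⟪u, u - (a * min 0 c) • g⟫ := by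
        rw [inner_sub_right, real_inner_self_eq_norm_sq, real_inner_smul_right, real_inner_comm]
        ring

theorem antitoneOn_norm_sub_of_inner_nonpos {f f' : ℝ → E} {D : Set ℝ} (hD : Convex ℝ D) (p : E)
    (hf : ∀ t ∈ D, HasDerivAt f (f' t) t) (hdescent : ∀ t ∈ D, ⟪f t - p, f' t⟫ ≤ 0) :
    AntitoneOn (fun t => ‖f t - p‖) D := by
  have hderiv : ∀ t ∈ D, HasDerivAt (fun t => ‖f t - p‖ ^ 2) (2 * ⟪f t - p, f' t⟫) t :=
    fun t ht => ((hf t ht).sub_const p).norm_sq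
  have hsq : AntitoneOn (fun t => ‖f t - p‖ ^ 2) D :=
    antitoneOn_of_hasDerivWithinAt_nonpos hD
      (fun t ht => (hderiv t ht).continuousAt.continuousWithinAt)
      (fun t ht => (hderiv t (interior_subset ht)).hasDerivWithinAt)
      (fun t ht => by linarith [hdescent t (interior_subset ht)])
  exact fun s hs t ht hst => (sq_le_sq₀ (norm_nonneg _) (norm_nonneg _)).1 (hsq hs ht hst)

end

theorem distance_to_goal_antitone_general
    {E : Type*} [NormedAddCommGroup E] [InnerProductSpace ℝ E]
    (ε ε' : ℝ)
    (k : ℝ) (hk : 0 < k) (xd : E)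
    (b : E → ℝ) (g κ₀ : E → E)
    (hκ₀ : ∀ x, κ₀ x = -(k • (x - xd)))
    (hgnorm : ∀ y, ‖g y‖ ≤ 1)
    (φ : E → ℝ) (hφ : ∀ x, φ x = min 1 ((ε' - b x) / (ε' - ε)))
    (κ : E → E)
    (hκ : ∀ x, κ x = κ₀ x - (max 0 (φ x) * min 0 ⟪g x, κ₀ x⟫) • g x)
    (x : ℝ → E)
    (hx : ∀ t ∈ Set.Ici (0 : ℝ), HasDerivAt x (κ (x t)) t) :
    AntitoneOn (fun t => ‖x t - xd‖) (Set.Ici 0) := by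
  have hgain : ∀ y, max 0 (φ y) ≤ 1 := fun y =>
    max_le zero_le_one (hφ y ▸ min_le_left _ _)
  have hdescent : ∀ y, ⟪y - xd, κ y⟫ ≤ 0 := fun y => by
    have h := inner_self_sub_smul_min_inner_nonneg (u := κ₀ y) (hgnorm y) (hgain y)
    rw [← hκ, hκ₀, inner_neg_left, real_inner_smul_left, neg_nonneg] at h
    exact nonpos_of_mul_nonpos_right h hk
  exact antitoneOn_norm_sub_of_inner_nonpos (convex_Ici 0) xd hx fun t _ => hdescent (x t)

/-- Monotonicity (Theorem 2). Along any trajectory of the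
closed-loop system `ẋ = κ(x)` with the nominal controller `κ₀(x) = −k(x − x_d)`
and `‖g‖ ≤ 1`, the distance `t ↦ ‖x(t) − x_d‖` is non-increasing on `[0, ∞)`. -/
theorem distance_to_goal_antitone
    {E : Type*} [NormedAddCommGroup E] [InnerProductSpace ℝ E]
    (ε ε' : ℝ) (hε : 0 < ε) (hεε' : ε < ε')
    (k : ℝ) (hk : 0 < k) (xd : E)
    (b : E → ℝ) (g κ₀ : E → E)
    (hκ₀ : ∀ x, κ₀ x = -(k • (x - xd)))
    (hgnorm : ∀ y, ‖g y‖ ≤ 1)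
    (φ : E → ℝ) (hφ : ∀ x, φ x = min 1 ((ε' - b x) / (ε' - ε)))
    (κ : E → E)
    (hκ : ∀ x, κ x = κ₀ x - (max 0 (φ x) * min 0 ⟪g x, κ₀ x⟫) • g x)
    (x : ℝ → E)
    (hx : ∀ t ∈ Set.Ici (0 : ℝ), HasDerivAt x (κ (x t)) t) :
    AntitoneOn (fun t => ‖x t - xd‖) (Set.Ici 0) :=
  distance_to_goal_antitone_general ε ε' k hk xd b g κ₀ hκ₀ hgnorm φ hφ κ hκ x hx
end

section
/- Let E be a real inner product space, 0 < ε < ε', k > 0, x_d ∈ E, and let κ be the smoothed controller κ(x) = κ₀(x) − max(0, φ(x)) · min(0, ⟪g(x), κ₀(x)⟫) · g(x) with φ(x) = min(1, (ε' − b(x))/(ε' − ε)) and κ₀(x) = −k(x − x_d). Assume ‖g(y)‖ ≤ 1 for every y ∈ E, and suppose r > 0 is such that b(y) > ε' for every y in the closed ball of radius r around x_d. Then every differentiable curve x : ℝ → E with x'(t) = κ(x(t)) for all t ≥ 0 and ‖x(0) − x_d‖ ≤ r satisfies x(t) = x_d + e^{−kt}·(x(0) − x_d) for all t ≥ 0;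 in particular ‖x(t) − x_d‖ = e^{−kt}‖x(0) − x_d‖, so x_d is locally exponentially stable. -/
/-!
On the closed ball where `b > ε'` the weight `φ` is negative, so the correction term vanishes and
the closed loop is the linear system `x' = -k (x - x_d)`, whose solutions are
`x_d + e^{-kt} (x(0) - x_d)`. Trajectories starting in the ball stay there because the filter
never turns the velocity against the nominal one: since `‖g‖ ≤ 1` and `0 ≤ max 0 φ ≤ 1`,
`⟪κ(x), κ₀(x)⟫ ≥ ‖κ₀(x)‖² - ⟪g(x), κ₀(x)⟫² ≥ 0`, so `‖x(t) - x_d‖` is non-increasing.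
-/

open scoped RealInnerProductSpace
open Set Real

section

variable {E : Type*} [NormedAddCommGroup E] [InnerProductSpace ℝ E]

theorem inner_sub_min_inner_smul_self_nonneg {g v : E} {a : ℝ} (hg : ‖g‖ ≤ 1) (ha₀ : 0 ≤ a)
    (ha₁ : a ≤ 1) : 0 ≤ ⟪v - (a * min 0 ⟪g, v⟫) • g, v⟫ := by
  set p := ⟪g, v⟫
  have hp : |p| ≤ ‖v‖ :=
    (abs_real_inner_le_norm g v).trans (mul_le_of_le_one_left (norm_nonneg v) hg)
  have hcut₀ : 0 ≤ min 0 p * p := by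
    rcases le_total 0 p with h | h <;> simp [h, mul_self_nonneg]
  have hcut₁ : min 0 p * p ≤ ‖v‖ ^ 2 := by
    calc min 0 p * p ≤ |p| ^ 2 := by
          rcases le_total 0 p with h | h <;> simp [h, sq_abs, ← sq]
      _ ≤ ‖v‖ ^ 2 := pow_le_pow_left₀ (abs_nonneg p) hp 2
  have hexpand : ⟪v - (a * min 0 p) • g, v⟫ = ‖v‖ ^ 2 - a * (min 0 p * p) := by
    rw [inner_sub_left, real_inner_smul_left, real_inner_self_eq_norm_sq]; ring
  rw [hexpand]
  nlinarith

theorem antitoneOn_norm_sub_of_inner_deriv_nonpos {f f' : ℝ → E} {c : E}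
    (hf : ∀ t ∈ Ici (0 : ℝ), HasDerivAt f (f' t) t)
    (hdiss : ∀ t ∈ Ici (0 : ℝ), ⟪f' t, f t - c⟫ ≤ 0) :
    AntitoneOn (fun t => ‖f t - c‖) (Ici 0) := by
  have hsq : ∀ t ∈ Ici (0 : ℝ),
      HasDerivAt (fun t => ‖f t - c‖ ^ 2) (2 * ⟪f t - c, f' t⟫) t :=
    fun t ht => ((hf t ht).sub_const c).norm_sq
  have hanti : AntitoneOn (fun t => ‖f t - c‖ ^ 2) (Ici 0) := by
    refine antitoneOn_of_hasDerivWithinAt_nonpos (convex_Ici 0)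
      (fun t ht => (hsq t ht).continuousAt.continuousWithinAt)
      (fun t ht => (hsq t (interior_subset ht)).hasDerivWithinAt) (fun t ht => ?_)
    rw [real_inner_comm]
    linarith [hdiss t (interior_subset ht)]
  intro s hs t ht hst
  exact (pow_le_pow_iff_left₀ (norm_nonneg _) (norm_nonneg _) two_ne_zero).1 (hanti hs ht hst)

theorem eq_exp_smul_of_hasDerivAt_neg_smul {y : ℝ → E} {k : ℝ}
    (hy : ∀ t ∈ Ici (0 : ℝ), HasDerivAt y (-(k • y t)) t) :
    ∀ t ∈ Ici (0 : ℝ), y t = exp (-k * t) • y 0 := by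
  have hconst : ∀ t ∈ Ici (0 : ℝ), HasDerivAt (fun t => exp (k * t) • y t) 0 t := by
    intro t ht
    have hexp : HasDerivAt (fun t => exp (k * t)) (exp (k * t) * k) t := by
      simpa using ((hasDerivAt_id t).const_mul k).exp
    have hzero : exp (k * t) • -(k • y t) + (exp (k * t) * k) • y t = 0 := by module
    exact hzero ▸ hexp.smul (hy t ht)
  intro t ht
  have hinv : exp (k * t) • y t = y 0 := by
    simpa using constant_of_has_deriv_right_zero
      (fun s hs => (hconst s hs.1).continuousAt.continuousWithinAt)
      (fun s hs => (hconst s hs.1).hasDerivWithinAt) t ⟨ht, le_rfl⟩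
  rw [← hinv, smul_smul, ← exp_add]
  simp

end

theorem local_exponential_stability_general
    {E : Type*} [NormedAddCommGroup E] [InnerProductSpace ℝ E]
    (ε ε' : ℝ) (hεε' : ε < ε')
    (k : ℝ) (hk : 0 < k) (xd : E)
    (b : E → ℝ) (g κ₀ : E → E)
    (hκ₀ : ∀ x, κ₀ x = -(k • (x - xd)))
    (hgnorm : ∀ y, ‖g y‖ ≤ 1)
    (φ : E → ℝ) (hφ : ∀ x, φ x = min 1 ((ε' - b x) / (ε' - ε)))
    (κ : E → E)
    (hκ : ∀ x, κ x = κ₀ x - (max 0 (φ x) * min 0 ⟪g x, κ₀ x⟫) • g x)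
    (r : ℝ)
    (hball : ∀ y ∈ Metric.closedBall xd r, ε' < b y)
    (x : ℝ → E)
    (hx : ∀ t ∈ Set.Ici (0 : ℝ), HasDerivAt x (κ (x t)) t)
    (hx0 : ‖x 0 - xd‖ ≤ r) :
    ∀ t ∈ Set.Ici (0 : ℝ),
      x t = xd + Real.exp (-k * t) • (x 0 - xd)
      ∧ ‖x t - xd‖ = Real.exp (-k * t) * ‖x 0 - xd‖ := by
  have hdiss : ∀ z, ⟪κ z, z - xd⟫ ≤ 0 := by
    intro z
    have hφ₁ : φ z ≤ 1 := (hφ z).trans_le (min_le_left _ _)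
    have halign : 0 ≤ ⟪κ z, κ₀ z⟫ := hκ z ▸ inner_sub_min_inner_smul_self_nonneg (hgnorm z)
      (le_max_left _ _) (max_le zero_le_one hφ₁)
    rw [hκ₀, inner_neg_right, real_inner_smul_right] at halign
    nlinarith
  have hnominal : ∀ z ∈ Metric.closedBall xd r, κ z = κ₀ z := by
    intro z hz
    have hφ₀ : φ z ≤ 0 := (hφ z).trans_le <| (min_le_right _ _).trans <|
      div_nonpos_of_nonpos_of_nonneg (by linarith [hball z hz]) (by linarith)
    rw [hκ, max_eq_left hφ₀, zero_mul, zero_smul, sub_zero]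
  have hy : ∀ t ∈ Ici (0 : ℝ), HasDerivAt (x · - xd) (κ (x t)) t :=
    fun t ht => (hx t ht).sub_const xd
  have hin : ∀ t ∈ Ici (0 : ℝ), x t ∈ Metric.closedBall xd r := fun t ht =>
    mem_closedBall_iff_norm.2 <| (antitoneOn_norm_sub_of_inner_deriv_nonpos hx
      (fun t _ => hdiss (x t)) self_mem_Ici ht ht).trans hx0
  intro t ht
  have hsol := eq_exp_smul_of_hasDerivAt_neg_smul
    (fun t ht => hκ₀ (x t) ▸ hnominal _ (hin t ht) ▸ hy t ht) t ht
  refine ⟨by rw [← hsol]; abel, ?_⟩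
  rw [hsol, norm_smul, norm_of_nonneg (exp_pos _).le]

/-- Local exponential stability (Theorem 2). If `b > ε'` on the
closed ball of radius `r` around `x_d`, then every closed-loop trajectory
starting in this ball satisfies `x(t) = x_d + e^{−kt}(x(0) − x_d)` for all
`t ≥ 0`; in particular `‖x(t) − x_d‖ = e^{−kt}‖x(0) − x_d‖`. -/
theorem local_exponential_stability
    {E : Type*} [NormedAddCommGroup E] [InnerProductSpace ℝ E]
    (ε ε' : ℝ) (hε : 0 < ε) (hεε' : ε < ε')
    (k : ℝ) (hk : 0 < k) (xd : E)
    (b : E → ℝ) (g κ₀ : E → E)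
    (hκ₀ : ∀ x, κ₀ x = -(k • (x - xd)))
    (hgnorm : ∀ y, ‖g y‖ ≤ 1)
    (φ : E → ℝ) (hφ : ∀ x, φ x = min 1 ((ε' - b x) / (ε' - ε)))
    (κ : E → E)
    (hκ : ∀ x, κ x = κ₀ x - (max 0 (φ x) * min 0 ⟪g x, κ₀ x⟫) • g x)
    (r : ℝ) (hr : 0 < r)
    (hball : ∀ y ∈ Metric.closedBall xd r, ε' < b y)
    (x : ℝ → E)
    (hx : ∀ t ∈ Set.Ici (0 : ℝ), HasDerivAt x (κ (x t)) t)
    (hx0 : ‖x 0 - xd‖ ≤ r) :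
    ∀ t ∈ Set.Ici (0 : ℝ),
      x t = xd + Real.exp (-k * t) • (x 0 - xd)
      ∧ ‖x t - xd‖ = Real.exp (-k * t) * ‖x 0 - xd‖ :=
  local_exponential_stability_general ε ε' hεε' k hk xd b g κ₀ hκ₀ hgnorm φ hφ κ hκ r hball x hx hx0
end

section
/- Let E be a real inner product space, C ⊆ E a nonempty closed convex set, and P : E → E a map such that for every y ∈ E, P y ∈ C and ‖y − P y‖ ≤ ‖y − a‖ for all a ∈ C (i.e. P is the metric projection onto C). If P is differentiable at a point x, then its derivative L = fderiv ℝ P x is self-adjoint: ⟪L u, w⟫ = ⟪u, L w⟫ for all u, w ∈ E. -/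
open scoped RealInnerProductSpace

/-- The derivative of the metric projection `P` onto a nonempty
closed convex set `C`, at any point where it exists, is a self-adjoint
operator. -/
theorem fderiv_convex_projection_selfAdjoint
    {E : Type*} [NormedAddCommGroup E] [InnerProductSpace ℝ E]
    (C : Set E) (hC : C.Nonempty) (hCc : IsClosed C) (hCconv : Convex ℝ C)
    (P : E → E)
    (hP : ∀ y : E, P y ∈ C ∧ ∀ a ∈ C, ‖y - P y‖ ≤ ‖y - a‖)
    (x : E) (hdiff : DifferentiableAt ℝ P x) :
    ∀ u w : E, ⟪fderiv ℝ P x u, w⟫ = ⟪u, fderiv ℝ P x w⟫ := by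
  haveI : Nonempty C := hC.to_subtype
  -- variational inequality
  have hvar : ∀ y : E, ∀ a ∈ C, ⟪y - P y, a - P y⟫ ≤ 0 := by
    intro y a ha
    have hPy := (hP y).1
    have hinf : ‖y - P y‖ = ⨅ w : C, ‖y - w‖ := by
      refine le_antisymm (le_ciInf fun w => (hP y).2 w w.2) ?_
      have hbdd : BddBelow (Set.range fun w : C => ‖y - (w : E)‖) :=
        ⟨0, by rintro r ⟨w, rfl⟩; exact norm_nonneg _⟩
      exact ciInf_le hbdd ⟨P y, hPy⟩
    exact (norm_eq_iInf_iff_real_inner_le_zero hCconv hPy).1 hinf a ha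
  set f : E → ℝ := fun y => ⟪y, P y⟫ - ‖P y‖ ^ 2 / 2 with hfdef
  -- key bounds
  have key : ∀ y z : E, 0 ≤ f z - f y - ⟪P y, z - y⟫ ∧
      f z - f y - ⟪P y, z - y⟫ ≤ ‖z - y‖ ^ 2 := by
    intro y z
    set p := P y
    set q := P z
    have hA : ⟪z - q, p - q⟫ ≤ 0 := hvar z p (hP y).1
    have hB : ⟪y - p, q - p⟫ ≤ 0 := hvar y q (hP z).1
    have hD : ⟪z - y, q - p⟫ ≤ ‖z - y‖ * ‖q - p‖ := real_inner_le_norm _ _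
    have hcs : ‖q - p‖ ^ 2 ≤ ‖z - y‖ * ‖q - p‖ := by
      have hid : ⟪z - q, p - q⟫ + ⟪y - p, q - p⟫ = ‖q - p‖ ^ 2 - ⟪z - y, q - p⟫ := by
        simp only [norm_sub_sq_real, inner_sub_left, inner_sub_right, real_inner_self_eq_norm_sq,
          real_inner_comm p q, real_inner_comm z q, real_inner_comm y p,
          real_inner_comm z y, real_inner_comm z p, real_inner_comm y q]
        ring
      nlinarith
    have hne : ‖q - p‖ ≤ ‖z - y‖ := by
      rcases eq_or_lt_of_le (norm_nonneg (q - p)) with h0 | h0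
      · rw [← h0]; exact norm_nonneg _
      · nlinarith
    have he : f z - f y - ⟪p, z - y⟫
        = ⟪z - y, q - p⟫ + ⟪y - p, q - p⟫ - ‖q - p‖ ^ 2 / 2 := by
      simp only [hfdef, norm_sub_sq_real, inner_sub_left, inner_sub_right, real_inner_self_eq_norm_sq,
        real_inner_comm p q, real_inner_comm z q, real_inner_comm y p,
        real_inner_comm z y, real_inner_comm z p, real_inner_comm y q]
      ring
    have he' : f z - f y - ⟪p, z - y⟫ = -⟪z - q, p - q⟫ + ‖q - p‖ ^ 2 / 2 := by
      rw [he]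
      simp only [norm_sub_sq_real, inner_sub_left, inner_sub_right, real_inner_self_eq_norm_sq,
        real_inner_comm p q, real_inner_comm z q, real_inner_comm y p,
        real_inner_comm z y, real_inner_comm z p, real_inner_comm y q]
      ring
    constructor
    · rw [he']; nlinarith
    · rw [he]; nlinarith
  -- f has gradient P everywhere
  have hfderiv : ∀ y : E, HasFDerivAt f (innerSL ℝ (P y)) y := by
    intro y
    rw [hasFDerivAt_iff_isLittleO_nhds_zero]
    rw [Asymptotics.isLittleO_iff]
    intro ε hε
    filter_upwards [Metric.closedBall_mem_nhds (0 : E) hε] with h hh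
    have hh' : ‖h‖ ≤ ε := by simpa using hh
    have hk := key y (y + h)
    have hsub : y + h - y = h := by abel
    rw [hsub] at hk
    rw [Real.norm_eq_abs, abs_of_nonneg]
    · simp only [innerSL_apply_apply]
      calc f (y + h) - f y - ⟪P y, h⟫ ≤ ‖h‖ ^ 2 := hk.2
        _ = ‖h‖ * ‖h‖ := sq ‖h‖
        _ ≤ ε * ‖h‖ := by
            exact mul_le_mul_of_nonneg_right hh' (norm_nonneg _)
    · simpa using hk.1
  -- second derivative symmetric
  intro u w
  have hL : HasFDerivAt P (fderiv ℝ P x) x := hdiff.hasFDerivAt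
  have hg : HasFDerivAt (fun y => innerSL ℝ (P y))
      ((innerSL ℝ (E := E)).comp (fderiv ℝ P x)) x :=
    (innerSL ℝ (E := E)).hasFDerivAt.comp x hL
  have := second_derivative_symmetric hfderiv hg u w
  simp only [ContinuousLinearMap.comp_apply, innerSL_apply_apply] at this
  rw [this, real_inner_comm]
end

section
/- Let E = EuclideanSpace ℝ (Fin n), let κ : E → E be locally Lipschitz, let x_d ∈ E, and assume ⟪y − x_d, κ(y)⟫ ≤ 0 for every y ∈ E. Let x : ℝ → E be differentiable with x'(t) = κ(x(t)) for all t ≥ 0. If p ∈ E is a cluster point of the trajectory at infinity, i.e. there is a sequence tₘ → ∞ with x(tₘ) → p, then ⟪p − x_d, κ(p)⟫ = 0. -/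
/-!
Along the trajectory `V τ = ‖x τ - xd‖ ^ 2` is non-increasing, and `V (t m) → ‖p - xd‖ ^ 2`,
so `V` never drops below `‖p - xd‖ ^ 2`. If `⟪p - xd, κ p⟫ < 0`, continuity at `p` gives a ball
on which `V' = 2 ⟪x - xd, κ x⟫` is uniformly negative and the speed `‖κ x‖` is bounded; a
trajectory passing close to `p` therefore stays in that ball for a fixed time and `V` loses a
fixed amount `ε`. Applied at the times `t m`, this forces `‖p - xd‖ ^ 2 + ε ≤ ‖p - xd‖ ^ 2`.
-/

open scoped RealInnerProductSpace

open Set Filter Metric Topology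

theorem AntitoneOn.le_of_tendsto_comp {ι : Type*} {l : Filter ι} [l.NeBot] {f : ℝ → ℝ}
    {a L : ℝ} {t : ι → ℝ} (hf : AntitoneOn f (Ici a)) (ht : Tendsto t l atTop)
    (hL : Tendsto (f ∘ t) l (𝓝 L)) {τ : ℝ} (hτ : a ≤ τ) : L ≤ f τ :=
  le_of_tendsto hL <| (ht.eventually_ge_atTop τ).mono fun _ hm => hf hτ (hτ.trans hm) hm

theorem sub_le_mul_sub_of_hasDerivAt_le {f f' : ℝ → ℝ} {a b C : ℝ} (hab : a ≤ b)
    (hf : ∀ u ∈ Icc a b, HasDerivAt f (f' u) u) (hC : ∀ u ∈ Ico a b, f' u ≤ C) :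
    f b - f a ≤ C * (b - a) := by
  have hB : ∀ u, HasDerivAt (fun u => f a + C * (u - a)) C u := fun u => by
    simpa using (((hasDerivAt_id u).sub_const a).const_mul C).const_add (f a)
  have := image_le_of_deriv_right_le_deriv_boundary
    (fun u hu => (hf u hu).continuousAt.continuousWithinAt)
    (fun u hu => (hf u (Ico_subset_Icc_self hu)).hasDerivWithinAt) (by simp)
    (fun u _ => (hB u).continuousAt.continuousWithinAt) (fun u _ => (hB u).hasDerivWithinAt) hC
    (right_mem_Icc.2 hab)
  linarith

section Trajectory

variable {E : Type*} [NormedAddCommGroup E] [NormedSpace ℝ E]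

theorem mapsTo_closedBall_of_norm_deriv_lt {x x' : ℝ → E} {p : E} {s T R M : ℝ} (hM : 0 ≤ M)
    (hx : ∀ u ∈ Icc s T, HasDerivAt x (x' u) u)
    (hbound : ∀ u ∈ Ico s T, x u ∈ closedBall p R → ‖x' u‖ < M)
    (hR : dist (x s) p + M * (T - s) ≤ R) :
    MapsTo x (Icc s T) (closedBall p R) := by
  have hB_le : ∀ u ≤ T, dist (x s) p + M * (u - s) ≤ R := fun u hu => by nlinarith
  have hB : ∀ u, HasDerivAt (fun u => dist (x s) p + M * (u - s)) M u := fun u => by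
    simpa using (((hasDerivAt_id u).sub_const s).const_mul M).const_add (dist (x s) p)
  have key := image_norm_le_of_norm_deriv_right_lt_deriv_boundary (f := fun u => x u - p)
    (fun u hu => ((hx u hu).continuousAt.sub continuousAt_const).continuousWithinAt)
    (fun u hu => ((hx u (Ico_subset_Icc_self hu)).sub_const p).hasDerivWithinAt)
    (by simp [dist_eq_norm]) hB fun u hu heq => hbound u hu <| by
      rw [mem_closedBall, dist_eq_norm, heq]; exact hB_le u hu.2.le
  intro u hu
  rw [mem_closedBall, dist_eq_norm]
  exact (key hu).trans (hB_le u hu.2)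

theorem exists_uniform_decrease_of_deriv_neg {F : E → E} {x : ℝ → E} {g : E → ℝ} {V : ℝ → ℝ}
    {a : ℝ} {p : E} (hF : ContinuousAt F p) (hx : ∀ τ ∈ Ici a, HasDerivAt x (F (x τ)) τ)
    (hV : ∀ τ ∈ Ici a, HasDerivAt V (g (x τ)) τ) (hg : ContinuousAt g p) (hp : g p < 0) :
    ∃ δ > 0, ∃ ε > 0, ∃ ρ > 0, ∀ s ∈ Ici a, dist (x s) p ≤ ρ → V (s + δ) ≤ V s - ε := by
  set M := ‖F p‖ + 1
  have hM : 0 < M := by positivity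
  obtain ⟨r, hr, hball⟩ : ∃ r > 0, ∀ {y}, dist y p < r → g y < g p / 2 ∧ ‖F y‖ < M :=
    eventually_nhds_iff.1 <| (hg.eventually (gt_mem_nhds (by linarith))).and
      (hF.norm.eventually (gt_mem_nhds (lt_add_one _)))
  have hδ : 0 < r / (4 * M) := by positivity
  refine ⟨r / (4 * M), hδ, -(g p / 2 * (r / (4 * M))), by nlinarith, r / 4, by positivity,
    fun s hs hxs => ?_⟩
  have hx' : ∀ u ∈ Icc s (s + r / (4 * M)), HasDerivAt x (F (x u)) u :=
    fun u hu => hx u (le_trans hs hu.1)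
  have hnear : ∀ u ∈ Icc s (s + r / (4 * M)), dist (x u) p < r := by
    refine fun u hu => lt_of_le_of_lt (mapsTo_closedBall_of_norm_deriv_lt (R := r / 2) hM.le hx'
      (fun v _ hv => (hball ?_).2) ?_ hu) ?_
    · exact hv.trans_lt (by linarith)
    · rw [add_sub_cancel_left, mul_div_left_comm, div_mul_cancel_right₀ hM.ne']
      linarith
    · linarith
  have := sub_le_mul_sub_of_hasDerivAt_le (by linarith) (fun u hu => hV u (le_trans hs hu.1))
    fun u hu => (hball (hnear u (Ico_subset_Icc_self hu))).1.le
  rw [add_sub_cancel_left] at this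
  linarith

end Trajectory

/-- LaSalle-type convergence step of Theorem 2. If `κ` is locally
Lipschitz and satisfies the descent inequality `⟪y − x_d, κ(y)⟫ ≤ 0`, and `x`
is a trajectory of `ẋ = κ(x)` on `[0, ∞)`, then any cluster point `p` of the
trajectory at infinity satisfies `⟪p − x_d, κ(p)⟫ = 0`. -/
theorem omega_limit_point_stationary
    (n : ℕ)
    (κ : EuclideanSpace ℝ (Fin n) → EuclideanSpace ℝ (Fin n))
    (hκ : LocallyLipschitz κ)
    (xd : EuclideanSpace ℝ (Fin n))
    (hdescent : ∀ y : EuclideanSpace ℝ (Fin n), ⟪y - xd, κ y⟫ ≤ 0)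
    (x : ℝ → EuclideanSpace ℝ (Fin n))
    (hx : ∀ t ∈ Set.Ici (0 : ℝ), HasDerivAt x (κ (x t)) t)
    (p : EuclideanSpace ℝ (Fin n))
    (t : ℕ → ℝ)
    (ht : Filter.Tendsto t Filter.atTop Filter.atTop)
    (hconv : Filter.Tendsto (fun m => x (t m)) Filter.atTop (nhds p)) :
    ⟪p - xd, κ p⟫ = 0 := by
  refine le_antisymm (hdescent p) (not_lt.1 fun hneg => ?_)
  set V : ℝ → ℝ := fun τ => ‖x τ - xd‖ ^ 2
  have hV : ∀ τ ∈ Ici (0 : ℝ), HasDerivAt V (2 * ⟪x τ - xd, κ (x τ)⟫) τ :=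
    fun τ hτ => ((hx τ hτ).sub_const xd).norm_sq
  have hVanti : AntitoneOn V (Ici 0) :=
    antitoneOn_of_hasDerivWithinAt_nonpos (convex_Ici 0)
      (fun τ hτ => (hV τ hτ).continuousAt.continuousWithinAt)
      (fun τ hτ => (hV τ (interior_subset hτ)).hasDerivWithinAt)
      fun τ _ => by linarith [hdescent (x τ)]
  have hVt : Tendsto (V ∘ t) atTop (𝓝 (‖p - xd‖ ^ 2)) := ((hconv.sub_const xd).norm).pow 2
  have hg : Continuous fun y => 2 * ⟪y - xd, κ y⟫ :=
    continuous_const.mul ((continuous_id.sub continuous_const).inner hκ.continuous)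
  obtain ⟨δ, hδ, ε, hε, ρ, hρ, hdec⟩ := exists_uniform_decrease_of_deriv_neg
    (g := fun y => 2 * ⟪y - xd, κ y⟫) hκ.continuous.continuousAt hx hV hg.continuousAt
    (by linarith)
  have : ‖p - xd‖ ^ 2 + ε ≤ ‖p - xd‖ ^ 2 := by
    refine ge_of_tendsto hVt ?_
    filter_upwards [ht.eventually_ge_atTop 0, hconv.eventually (closedBall_mem_nhds p hρ)]
      with m hm hmp
    show _ ≤ V (t m)
    linarith [hVanti.le_of_tendsto_comp ht hVt (by linarith : (0 : ℝ) ≤ t m + δ), hdec _ hm hmp]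
  linarith
end
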